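/- Let g be a real Lie algebra and let p ⊆ g^ℂ be a real Lie subalgebra with g^ℂ = (g ⊗ 1) ∔ p as an internal direct sum of real subspaces. Let R_p be the ℝ-linear operator on g defined by: for X ∈ g, A_X is the unique element of p with X ⊗ 1 = (i/2)(A_X − τ(A_X)), and (R_p X) ⊗ 1 := (1/2)(A_X + τ(A_X)). Then the image of the map g → g^ℂ, X ↦ (R_p X) ⊗ 1 − X ⊗ i, equals p (i.e. g_{R_p} = p, one direction of the bijective correspondence between solutions of mCYBE(−1) and complementary subalgebras). -/
import Mathlib


open TensorProduct

/-- The conjugation `τ : g^ℂ → g^ℂ`, determined by `τ(u ⊗ X) = ū ⊗ X`,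
realised on the complexification `ℂ ⊗[ℝ] g`. -/
noncomputable def conjMap (g : Type*) [AddCommGroup g] [Module ℝ g] :
    ℂ ⊗[ℝ] g →ₗ[ℝ] ℂ ⊗[ℝ] g :=
  LinearMap.rTensor g Complex.conjAe.toLinearMap

lemma conjMap_tmul {g : Type*} [AddCommGroup g] [Module ℝ g] (c : ℂ) (x : g) :
    conjMap g (c ⊗ₜ[ℝ] x) = (starRingEnd ℂ c) ⊗ₜ[ℝ] x := rfl

lemma conjMap_smul {g : Type*} [AddCommGroup g] [Module ℝ g] (c : ℂ) (v : ℂ ⊗[ℝ] g) :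
    conjMap g (c • v) = (starRingEnd ℂ c) • conjMap g v := by
  induction v using TensorProduct.induction_on with
  | zero => simp
  | tmul a x => rw [smul_tmul', conjMap_tmul, conjMap_tmul, smul_tmul', smul_eq_mul,
      smul_eq_mul, map_mul]
  | add x y hx hy => rw [smul_add, map_add, hx, hy, map_add, smul_add]

lemma conjMap_conjMap {g : Type*} [AddCommGroup g] [Module ℝ g] (v : ℂ ⊗[ℝ] g) :
    conjMap g (conjMap g v) = v := by
  induction v using TensorProduct.induction_on with
  | zero => simp
  | tmul a x => rw [conjMap_tmul, conjMap_tmul, Complex.conj_conj]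
  | add x y hx hy => rw [map_add, map_add, hx, hy]

lemma add_conj_mem_range {g : Type*} [AddCommGroup g] [Module ℝ g] (v : ℂ ⊗[ℝ] g) :
    v + conjMap g v ∈ LinearMap.range (TensorProduct.mk ℝ ℂ g 1) := by
  induction v using TensorProduct.induction_on with
  | zero => simp
  | tmul a x =>
      refine ⟨(2 * a.re) • x, ?_⟩
      rw [conjMap_tmul, ← add_tmul]
      have : a + starRingEnd ℂ a = ((2 * a.re : ℝ) : ℂ) := by
        simp [Complex.ext_iff]; ring
      rw [this, TensorProduct.mk_apply, tmul_smul, smul_tmul', Complex.real_smul, mul_one]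
  | add x y hx hy =>
      have h := Submodule.add_mem _ hx hy
      rw [map_add]
      convert h using 1
      abel

lemma mem_range_of_fixed {g : Type*} [AddCommGroup g] [Module ℝ g] (v : ℂ ⊗[ℝ] g)
    (h : conjMap g v = v) : v ∈ LinearMap.range (TensorProduct.mk ℝ ℂ g 1) := by
  have key := add_conj_mem_range v
  rw [h] at key
  have : v = (1 / 2 : ℝ) • (v + v) := by
    rw [smul_add, ← add_smul]; norm_num
  rw [this]
  exact Submodule.smul_mem _ _ key

/-- With `p ⊆ g^ℂ` a real Lie subalgebra complementary to `g ⊗ 1`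
and `R_p` the operator recovered from `p` by the non-split rule, the image of
`X ↦ (R_p X) ⊗ 1 − X ⊗ i` is exactly `p`; i.e. `g_{R_p} = p`. -/
theorem stmt6 (g : Type*) [LieRing g] [LieAlgebra ℝ g]
    (p : Submodule ℝ (ℂ ⊗[ℝ] g))
    (hsub : ∀ x ∈ p, ∀ y ∈ p, ⁅x, y⁆ ∈ p)
    (hcompl : IsCompl (LinearMap.range (TensorProduct.mk ℝ ℂ g 1)) p)
    (Rp : g → g)
    (hRp : ∀ (X : g) (A : ℂ ⊗[ℝ] g), A ∈ p →
        (1 : ℂ) ⊗ₜ[ℝ] X = (Complex.I / 2) • (A - conjMap g A) →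
        (1 : ℂ) ⊗ₜ[ℝ] (Rp X) = (1 / 2 : ℂ) • (A + conjMap g A)) :
    Set.range (fun X : g => (1 : ℂ) ⊗ₜ[ℝ] (Rp X) - Complex.I ⊗ₜ[ℝ] X)
      = (p : Set (ℂ ⊗[ℝ] g)) := by
  have hI : ∀ X : g, Complex.I ⊗ₜ[ℝ] X = Complex.I • ((1 : ℂ) ⊗ₜ[ℝ] X) := by
    intro X; rw [smul_tmul', smul_eq_mul, mul_one]
  have final : ∀ (X : g) (A : ℂ ⊗[ℝ] g),
      (1 : ℂ) ⊗ₜ[ℝ] X = (Complex.I / 2) • (A - conjMap g A) →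
      (1 : ℂ) ⊗ₜ[ℝ] (Rp X) = (1 / 2 : ℂ) • (A + conjMap g A) →
      (1 : ℂ) ⊗ₜ[ℝ] (Rp X) - Complex.I ⊗ₜ[ℝ] X = A := by
    intro X A h1 h2
    rw [hI, h1, h2, smul_smul]
    have hc : Complex.I * (Complex.I / 2) = -(1 / 2 : ℂ) := by
      linear_combination (1 / 2 : ℂ) * Complex.I_mul_I
    rw [hc]
    module
  ext v
  simp only [Set.mem_range, SetLike.mem_coe]
  constructor
  · rintro ⟨X, rfl⟩
    have htop : (-Complex.I) ⊗ₜ[ℝ] X ∈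
        LinearMap.range (TensorProduct.mk ℝ ℂ g 1) ⊔ p := by
      rw [hcompl.sup_eq_top]; trivial
    obtain ⟨y, hy, A, hA, hsum⟩ := Submodule.mem_sup.mp htop
    obtain ⟨Y, hY⟩ := hy
    have hτA : conjMap g A = Complex.I ⊗ₜ[ℝ] X - (1 : ℂ) ⊗ₜ[ℝ] Y := by
      have hA' : A = (-Complex.I) ⊗ₜ[ℝ] X - (1 : ℂ) ⊗ₜ[ℝ] Y := by
        rw [← hY] at hsum
        rw [← hsum, TensorProduct.mk_apply]; abel
      rw [hA', map_sub, conjMap_tmul, conjMap_tmul, map_neg, map_one, Complex.conj_I,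
        neg_neg]
    have h1 : (1 : ℂ) ⊗ₜ[ℝ] X = (Complex.I / 2) • (A - conjMap g A) := by
      have hA' : A = (-Complex.I) ⊗ₜ[ℝ] X - (1 : ℂ) ⊗ₜ[ℝ] Y := by
        rw [← hY] at hsum
        rw [← hsum, TensorProduct.mk_apply]; abel
      rw [hτA, hA']
      have : (-Complex.I) ⊗ₜ[ℝ] X = (-Complex.I) • ((1 : ℂ) ⊗ₜ[ℝ] X) := by
        rw [smul_tmul', smul_eq_mul, mul_one]
      rw [this, hI]
      rw [show ((-Complex.I) • ((1:ℂ) ⊗ₜ[ℝ] X) - (1:ℂ) ⊗ₜ[ℝ] Y) -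
          (Complex.I • ((1:ℂ) ⊗ₜ[ℝ] X) - (1:ℂ) ⊗ₜ[ℝ] Y)
          = (-(2 * Complex.I)) • ((1:ℂ) ⊗ₜ[ℝ] X) from by module]
      rw [smul_smul]
      rw [show Complex.I / 2 * -(2 * Complex.I) = 1 from by
        linear_combination -Complex.I_mul_I]
      rw [one_smul]
    have h2 := hRp X A hA h1
    rw [final X A h1 h2]
    exact hA
  · intro hv
    have hfix : conjMap g ((Complex.I / 2) • (v - conjMap g v))
        = (Complex.I / 2) • (v - conjMap g v) := by
      rw [conjMap_smul, map_sub, conjMap_conjMap]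
      rw [show starRingEnd ℂ (Complex.I / 2) = -(Complex.I / 2) from by
        rw [map_div₀, Complex.conj_I, Complex.conj_ofNat, neg_div]]
      module
    obtain ⟨X, hX⟩ := mem_range_of_fixed _ hfix
    rw [TensorProduct.mk_apply] at hX
    have h2 := hRp X v hv hX
    exact ⟨X, final X v hX h2⟩
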